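/- arXiv:1602.00743 — 2 statements merged into one kernel-verified Lean document; each statement's English description precedes it below -/
import Mathlib

section
/- Every real number x in [a_0 − 1, a_0] admits a representation x = ∑_{n=1}^∞ (−1)^n ε_n/(d_1⋯d_n) with ε_n ∈ {0,...,d_n−1} for all n. -/
open Finset

/-- Product d_1 d_2 ... d_n. -/
noncomputable def P (d : ℕ → ℕ) (n : ℕ) : ℝ := ∏ i ∈ Finset.Icc 1 n, (d i : ℝ)

/-- The alternating Cantor series sum ∑_{n≥1} (-1)^n ε_n/(d_1...d_n). -/
noncomputable def negaSum (d ε : ℕ → ℕ) : ℝ :=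
  ∑' n : ℕ, (-1 : ℝ) ^ (n + 1) * (ε (n + 1) : ℝ) / P d (n + 1)

/-- a₀ = ∑_{n≥1} (-1)^{n+1}/(d_1...d_n). -/
noncomputable def a0 (d : ℕ → ℕ) : ℝ := ∑' n : ℕ, (-1 : ℝ) ^ n / P d (n + 1)

/-!
Put `y = a₀ - x ∈ [0, 1]`. Since `a₀ - ∑ (-1)ⁿ εₙ / (d₁⋯dₙ) = ∑ (-1)ⁿ⁺¹ (εₙ + 1) / (d₁⋯dₙ)`, it
suffices to expand `y` with digits `εₙ + 1 ∈ {1, …, dₙ}`. This is done greedily: for `z ∈ [0, 1]`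
write `b z = (ε + 1) - z'` with `ε + 1 = max 1 ⌈b z⌉` and `z' ∈ [0, 1]`, then continue with `z'`.
After `N` steps `y = ∑_{n ≤ N} (-1)ⁿ⁺¹ (εₙ + 1) / (d₁⋯dₙ) + (-1)ᴺ z_N / (d₁⋯d_N)`, and the error
term is at most `2⁻ᴺ`.
-/

namespace AlternatingCantor

variable {d : ℕ → ℕ}

lemma P_succ (d : ℕ → ℕ) (n : ℕ) : P d (n + 1) = P d n * d (n + 1) := by
  simp [P, prod_Icc_succ_top (Nat.le_add_left 1 n)]

lemma P_pos (hd : ∀ n, 1 ≤ n → 0 < d n) (n : ℕ) : 0 < P d n :=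
  prod_pos fun i hi => Nat.cast_pos.mpr (hd i (mem_Icc.mp hi).1)

lemma two_pow_le_P (hd : ∀ n, 1 ≤ n → 2 ≤ d n) (n : ℕ) : (2 : ℝ) ^ n ≤ P d n := by
  calc (2 : ℝ) ^ n = ∏ _i ∈ Icc 1 n, (2 : ℝ) := by simp
    _ ≤ P d n := prod_le_prod (fun _ _ => zero_le_two) fun i hi => by
      exact_mod_cast hd i (mem_Icc.mp hi).1

lemma abs_div_P_le (hd : ∀ n, 1 ≤ n → 2 ≤ d n) {c : ℝ} (hc : |c| ≤ 1) (n : ℕ) :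
    |c / P d n| ≤ (1 / 2) ^ n := by
  have hP := two_pow_le_P hd n
  have hP₀ : 0 < P d n := (pow_pos two_pos n).trans_le hP
  calc |c / P d n| = |c| / P d n := by rw [abs_div, abs_of_pos hP₀]
    _ ≤ 1 / 2 ^ n := div_le_div₀ zero_le_one hc (pow_pos two_pos n) hP
    _ = (1 / 2) ^ n := (one_div_pow 2 n).symm

noncomputable def digit (b : ℕ) (z : ℝ) : ℕ := ⌈(b : ℝ) * z⌉₊ - 1

noncomputable def shift (b : ℕ) (z : ℝ) : ℝ := digit b z + 1 - b * z

lemma digit_le {b : ℕ} {z : ℝ} (hz : z ≤ 1) : digit b z ≤ b - 1 := by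
  have : ⌈(b : ℝ) * z⌉₊ ≤ b := Nat.ceil_le.mpr (mul_le_of_le_one_right b.cast_nonneg hz)
  unfold digit
  omega

lemma shift_mem_Icc (b : ℕ) {z : ℝ} (hz : z ∈ Set.Icc (0 : ℝ) 1) :
    shift b z ∈ Set.Icc (0 : ℝ) 1 := by
  have ht : 0 ≤ (b : ℝ) * z := mul_nonneg b.cast_nonneg hz.1
  -- `digit b z + 1 = max 1 ⌈b z⌉₊` because of truncated subtraction
  have hmax : digit b z + 1 = max 1 ⌈(b : ℝ) * z⌉₊ := by unfold digit; omega
  have hceil := Nat.ceil_lt_add_one ht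
  have hdig : (digit b z : ℝ) + 1 = max 1 (⌈(b : ℝ) * z⌉₊ : ℝ) := by exact_mod_cast hmax
  unfold shift
  constructor
  · linarith [Nat.le_ceil ((b : ℝ) * z), le_max_right (1 : ℝ) ⌈(b : ℝ) * z⌉₊]
  · linarith [max_le (by linarith : (1 : ℝ) ≤ b * z + 1) hceil.le]

variable {y : ℝ}

noncomputable def rem (d : ℕ → ℕ) (y : ℝ) : ℕ → ℝ
  | 0 => y
  | n + 1 => shift (d (n + 1)) (rem d y n)

noncomputable def digits (d : ℕ → ℕ) (y : ℝ) : ℕ → ℕ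
  | 0 => 0
  | n + 1 => digit (d (n + 1)) (rem d y n)

lemma rem_mem_Icc (hy : y ∈ Set.Icc (0 : ℝ) 1) (n : ℕ) : rem d y n ∈ Set.Icc (0 : ℝ) 1 := by
  induction n with
  | zero => exact hy
  | succ n ih => exact shift_mem_Icc _ ih

lemma digits_le (hy : y ∈ Set.Icc (0 : ℝ) 1) {n : ℕ} (hn : 1 ≤ n) : digits d y n ≤ d n - 1 := by
  obtain ⟨m, rfl⟩ : ∃ m, n = m + 1 := ⟨n - 1, by omega⟩
  exact digit_le (rem_mem_Icc hy m).2

lemma summable_div_P (hd : ∀ n, 1 ≤ n → 2 ≤ d n) {c : ℕ → ℝ} (hc : ∀ k, |c k| ≤ d (k + 1)) :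
    Summable fun k => c k / P d (k + 1) := by
  refine summable_geometric_two.of_norm_bounded fun k => ?_
  have hdk : (0 : ℝ) < d (k + 1) := by
    exact_mod_cast zero_lt_two.trans_le (hd (k + 1) (Nat.le_add_left 1 k))
  have hck : |c k / d (k + 1)| ≤ 1 := by rw [abs_div, Nat.abs_cast, div_le_one hdk]; exact hc k
  rw [P_succ, mul_comm, ← div_div]
  exact abs_div_P_le hd hck k

lemma hasSum_a0 (hd : ∀ n, 1 ≤ n → 2 ≤ d n) :
    HasSum (fun k => (-1 : ℝ) ^ k / P d (k + 1)) (a0 d) :=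
  (summable_div_P hd fun k => by
    rw [abs_pow, abs_neg, abs_one, one_pow]
    exact_mod_cast one_le_two.trans (hd (k + 1) (Nat.le_add_left 1 k))).hasSum

lemma eq_sum_add_rem (hd : ∀ n, 1 ≤ n → 0 < d n) (y : ℝ) (N : ℕ) :
    y = ∑ k ∈ range N, (-1 : ℝ) ^ k * (digits d y (k + 1) + 1) / P d (k + 1)
      + (-1 : ℝ) ^ N * rem d y N / P d N := by
  induction N with
  | zero => simp [rem, P]
  | succ N ih =>
    have hP := (P_pos hd N).ne'
    have hdN : (d (N + 1) : ℝ) ≠ 0 := by exact_mod_cast (hd (N + 1) (Nat.le_add_left 1 N)).ne'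
    have hstep : (-1 : ℝ) ^ N * rem d y N / P d N
        = (-1 : ℝ) ^ N * (digits d y (N + 1) + 1) / (P d N * d (N + 1))
          + (-1 : ℝ) ^ (N + 1) * rem d y (N + 1) / (P d N * d (N + 1)) := by
      simp only [rem, digits, shift]
      field_simp
      ring
    rw [sum_range_succ, P_succ, add_assoc, ← hstep]
    exact ih

theorem hasSum_digits (hd : ∀ n, 1 ≤ n → 2 ≤ d n) (hy : y ∈ Set.Icc (0 : ℝ) 1) :
    HasSum (fun k => (-1 : ℝ) ^ k * (digits d y (k + 1) + 1) / P d (k + 1)) y := by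
  have hsum : Summable fun k => (-1 : ℝ) ^ k * (digits d y (k + 1) + 1) / P d (k + 1) := by
    refine summable_div_P hd fun k => ?_
    have := digits_le (d := d) hy (Nat.le_add_left 1 k)
    have := hd (k + 1) (Nat.le_add_left 1 k)
    rw [abs_mul, abs_pow, abs_neg, abs_one, one_pow, one_mul, abs_of_nonneg (by positivity)]
    exact_mod_cast (by omega : digits d y (k + 1) + 1 ≤ d (k + 1))
  have hrem : Filter.Tendsto (fun N => (-1 : ℝ) ^ N * rem d y N / P d N) Filter.atTop (nhds 0) := by
    refine squeeze_zero_norm (fun N => abs_div_P_le hd ?_ N)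
      (tendsto_pow_atTop_nhds_zero_of_lt_one (by norm_num) (by norm_num))
    rw [abs_mul, abs_pow, abs_neg, abs_one, one_pow, one_mul, abs_le]
    exact ⟨by linarith [(rem_mem_Icc (d := d) hy N).1], (rem_mem_Icc hy N).2⟩
  have hd₀ : ∀ n, 1 ≤ n → 0 < d n := fun n hn => zero_lt_two.trans_le (hd n hn)
  refine hsum.hasSum_iff_tendsto_nat.mpr ?_
  have hlim := (tendsto_const_nhds (x := y)).sub hrem
  rw [sub_zero] at hlim
  exact hlim.congr fun N => by linarith [eq_sum_add_rem hd₀ y N]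

end AlternatingCantor

open AlternatingCantor in
theorem alternating_cantor_representation (d : ℕ → ℕ) (hd : ∀ n, 1 ≤ n → 2 ≤ d n)
    (x : ℝ) (hx : x ∈ Set.Icc (a0 d - 1) (a0 d)) :
    ∃ ε : ℕ → ℕ, (∀ n, 1 ≤ n → ε n ≤ d n - 1) ∧ x = negaSum d ε := by
  set y := a0 d - x
  have hy : y ∈ Set.Icc (0 : ℝ) 1 := ⟨by linarith [hx.2], by linarith [hx.1]⟩
  refine ⟨digits d y, fun n hn => digits_le hy hn, ?_⟩
  have hterms : (fun k => (-1 : ℝ) ^ (k + 1) * (digits d y (k + 1) : ℝ) / P d (k + 1))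
      = fun k => (-1 : ℝ) ^ k / P d (k + 1)
        - (-1 : ℝ) ^ k * (digits d y (k + 1) + 1) / P d (k + 1) := by
    funext k
    ring
  rw [negaSum, hterms, ((hasSum_a0 hd).sub (hasSum_digits hd hy)).tsum_eq]
  ring
end

section
/- If ε_n = d_n − 1 for all odd n and ε_n = 0 for all even n, then ∑_{n=1}^∞ (−1)^n ε_n/(d_1⋯d_n) = a_0 − 1; if ε_n = 0 for odd n and ε_n = d_n − 1 for even n, the sum equals a_0. -/
/-!
Since `(d_{n+1} - 1)/(d_1⋯d_{n+1}) = 1/P_n - 1/P_{n+1}` with `P_n = d_1⋯d_n`, a maximal digit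
contributes two consecutive terms of the alternating series `∑_{n ≥ 0} (-1)^{n+1}/P_n = a_0 - 1`.
Maximal digits at the odd places group this series as `(0,1), (2,3), …`; maximal digits at the
even places group it as `(1,2), (3,4), …`, which omits the initial term `-1`.
-/

open Finset

section Pairing

variable {G : Type*} [AddCommGroup G] [UniformSpace G] [IsUniformAddGroup G] [CompleteSpace G]
  [T2Space G] {f : ℕ → G}

theorem Summable.hasSum_pairs (hf : Summable f) :
    HasSum (fun k ↦ f (2 * k) + f (2 * k + 1)) (∑' n, f n) := by
  have he : Summable fun k ↦ f (2 * k) := hf.comp_injective fun a b h ↦ by omega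
  have ho : Summable fun k ↦ f (2 * k + 1) := hf.comp_injective fun a b h ↦ by omega
  rw [← tsum_even_add_odd he ho]
  exact he.hasSum.add ho.hasSum

theorem Summable.hasSum_ite_even (hf : Summable f) :
    HasSum (fun n ↦ if Even n then f n + f (n + 1) else 0) (∑' n, f n) := by
  rw [← add_zero (∑' n, f n)]
  refine HasSum.even_add_odd ?_ ?_
  · simpa only [even_two_mul, if_true] using hf.hasSum_pairs
  · simpa only [Nat.not_even_two_mul_add_one, if_false] using hasSum_zero

theorem Summable.hasSum_ite_odd (hf : Summable f) :
    HasSum (fun n ↦ if Even n then 0 else f n + f (n + 1)) (∑' n, f (n + 1)) := by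
  rw [← zero_add (∑' n, f (n + 1))]
  refine HasSum.even_add_odd ?_ ?_
  · simpa only [even_two_mul, if_true] using hasSum_zero
  · simpa only [Nat.not_even_two_mul_add_one, if_false, add_assoc]
      using ((summable_nat_add_iff 1).mpr hf).hasSum_pairs

end Pairing

section CantorProducts

variable {d : ℕ → ℕ}

lemma P_zero (d : ℕ → ℕ) : P d 0 = 1 := by simp [P]

lemma P_succ (d : ℕ → ℕ) (n : ℕ) : P d (n + 1) = P d n * d (n + 1) := by
  rw [P, P, prod_Icc_succ_top (Nat.le_add_left 1 n)]

lemma two_pow_le_P (hd : ∀ n, 1 ≤ n → 2 ≤ d n) (n : ℕ) : (2 : ℝ) ^ n ≤ P d n := by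
  induction n with
  | zero => simp [P_zero]
  | succ k ih =>
    have hk : (2 : ℝ) ≤ d (k + 1) := by exact_mod_cast hd _ (Nat.le_add_left 1 k)
    rw [P_succ, pow_succ]
    exact mul_le_mul ih hk zero_le_two ((pow_nonneg zero_le_two k).trans ih)

lemma P_pos (hd : ∀ n, 1 ≤ n → 2 ≤ d n) (n : ℕ) : 0 < P d n :=
  (pow_pos two_pos n).trans_le (two_pow_le_P hd n)

noncomputable def altInvP (d : ℕ → ℕ) (n : ℕ) : ℝ := (-1) ^ (n + 1) / P d n

lemma summable_altInvP (hd : ∀ n, 1 ≤ n → 2 ≤ d n) : Summable (altInvP d) := by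
  refine Summable.of_norm_bounded (summable_geometric_of_lt_one (r := 1 / 2) (by norm_num)
    (by norm_num)) fun n ↦ ?_
  rw [altInvP, norm_div, norm_pow, norm_neg, norm_one, one_pow, Real.norm_of_nonneg
    (P_pos hd n).le, div_pow, one_pow]
  exact one_div_le_one_div_of_le (by positivity) (two_pow_le_P hd n)

lemma tsum_altInvP_succ (d : ℕ → ℕ) : ∑' n, altInvP d (n + 1) = a0 d :=
  tsum_congr fun n ↦ by rw [altInvP, pow_succ, pow_succ, mul_assoc, neg_one_mul, neg_neg, mul_one]

lemma tsum_altInvP (hd : ∀ n, 1 ≤ n → 2 ≤ d n) : ∑' n, altInvP d n = a0 d - 1 := by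
  rw [(summable_altInvP hd).tsum_eq_zero_add, tsum_altInvP_succ, altInvP, P_zero]
  ring

lemma neg_one_pow_mul_maxDigit_div_P (hd : ∀ n, 1 ≤ n → 2 ≤ d n) (n : ℕ) :
    (-1) ^ (n + 1) * ((d (n + 1) - 1 : ℕ) : ℝ) / P d (n + 1) = altInvP d n + altInvP d (n + 1) := by
  have hd1 : 1 ≤ d (n + 1) := by linarith [hd (n + 1) (Nat.le_add_left 1 n)]
  have hPn := P_pos hd n
  have hdn : (0 : ℝ) < d (n + 1) := by exact_mod_cast hd1
  rw [altInvP, altInvP, Nat.cast_sub hd1, P_succ]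
  field_simp
  ring

end CantorProducts

theorem alternating_cantor_extreme_representations (d ε ε' : ℕ → ℕ)
    (hd : ∀ n, 1 ≤ n → 2 ≤ d n)
    (hεodd : ∀ n, 1 ≤ n → Odd n → ε n = d n - 1)
    (hεeven : ∀ n, 1 ≤ n → Even n → ε n = 0)
    (hε'odd : ∀ n, 1 ≤ n → Odd n → ε' n = 0)
    (hε'even : ∀ n, 1 ≤ n → Even n → ε' n = d n - 1) :
    negaSum d ε = a0 d - 1 ∧ negaSum d ε' = a0 d := by
  have hsum := summable_altInvP hd
  have hmax := neg_one_pow_mul_maxDigit_div_P hd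
  constructor
  · have hterm : (fun n ↦ (-1 : ℝ) ^ (n + 1) * (ε (n + 1) : ℝ) / P d (n + 1)) =
        fun n ↦ if Even n then altInvP d n + altInvP d (n + 1) else 0 := by
      funext n
      split_ifs with hn
      · rw [hεodd _ (Nat.le_add_left 1 n) hn.add_one, hmax]
      · rw [hεeven _ (Nat.le_add_left 1 n) (Nat.even_add_one.mpr hn)]
        simp
    rw [negaSum, hterm, hsum.hasSum_ite_even.tsum_eq, tsum_altInvP hd]
  · have hterm : (fun n ↦ (-1 : ℝ) ^ (n + 1) * (ε' (n + 1) : ℝ) / P d (n + 1)) =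
        fun n ↦ if Even n then 0 else altInvP d n + altInvP d (n + 1) := by
      funext n
      split_ifs with hn
      · rw [hε'odd _ (Nat.le_add_left 1 n) hn.add_one]
        simp
      · rw [hε'even _ (Nat.le_add_left 1 n) (Nat.even_add_one.mpr hn), hmax]
    rw [negaSum, hterm, hsum.hasSum_ite_odd.tsum_eq, tsum_altInvP_succ]
end
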